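/- Let Ω ⊆ ℂ × ℂ be open and let g : Ω → ℂ be holomorphic in both variables (z, t) and nowhere zero, satisfying the evolution equation ∂g/∂t = (i/2)·( ∂³g/∂z³ − 3·(∂g/∂z)·(∂²g/∂z²)/g + (3/2)·(∂g/∂z)³/g² ) on Ω. Then the function x := (∂g/∂z)/g satisfies the mKdV-type equation ∂x/∂t = (i/2)·( ∂³x/∂z³ − (3/2)·x²·(∂x/∂z) ) on Ω. -/

import Mathlib

/-! With `x = g_z / g` one has `g_zz = (x_z + x²) g` and `g_zzz = (x_zz + 3 x x_z + x³) g`, so the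
Shiffman equation says exactly `g_t / g = (i/2) (x_zz - x³/2)`. Since the mixed partials of the
holomorphic `g` commute, `x_t = (g_z / g)_t = (g_t / g)_z`, and differentiating the previous
identity in `z` gives the mKdV equation. -/

open Complex

/-- Partial derivative in the first (space, `z`) variable of a function on `ℂ × ℂ`. -/
noncomputable def dz (f : ℂ × ℂ → ℂ) (p : ℂ × ℂ) : ℂ := fderiv ℂ f p (1, 0)

/-- Partial derivative in the second (time, `t`) variable of a function on `ℂ × ℂ`. -/
noncomputable def dt (f : ℂ × ℂ → ℂ) (p : ℂ × ℂ) : ℂ := fderiv ℂ f p (0, 1)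

open Set

section Directional

variable {𝕜 : Type*} [NontriviallyNormedField 𝕜] {E : Type*} [NormedAddCommGroup E]
  [NormedSpace 𝕜 E] {f h : E → 𝕜} {p : E}

theorem fderiv_fun_mul_apply (hf : DifferentiableAt 𝕜 f p) (hh : DifferentiableAt 𝕜 h p)
    (v : E) :
    fderiv 𝕜 (fun q => f q * h q) p v = fderiv 𝕜 f p v * h p + f p * fderiv 𝕜 h p v := by
  rw [fderiv_fun_mul hf hh]
  simp only [add_apply, smul_apply, smul_eq_mul]
  ring

theorem fderiv_fun_div_apply (hf : DifferentiableAt 𝕜 f p) (hh : DifferentiableAt 𝕜 h p)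
    (h0 : h p ≠ 0) (v : E) :
    fderiv 𝕜 (fun q => f q / h q) p v
      = (fderiv 𝕜 f p v * h p - f p * fderiv 𝕜 h p v) / h p ^ 2 := by
  have hinv : fderiv 𝕜 (fun q => (h q)⁻¹) p v = -fderiv 𝕜 h p v / h p ^ 2 := by
    rw [fderiv_fun_comp p (differentiableAt_inv h0) hh, fderiv_inv]
    simp [div_eq_mul_inv, mul_comm]
  simp only [div_eq_mul_inv (f _)]
  rw [fderiv_fun_mul_apply hf (hh.fun_inv h0), hinv]
  field_simp
  ring

theorem AnalyticAt.fderiv_apply [CompleteSpace 𝕜] (hf : AnalyticAt 𝕜 f p) (v : E) :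
    AnalyticAt 𝕜 (fun q => fderiv 𝕜 f q v) p :=
  (ContinuousLinearMap.apply 𝕜 𝕜 v).analyticAt _ |>.comp hf.fderiv

theorem AnalyticAt.fderiv_fderiv_apply_comm [CompleteSpace 𝕜] (hf : AnalyticAt 𝕜 f p)
    (v w : E) :
    fderiv 𝕜 (fun q => fderiv 𝕜 f q v) p w = fderiv 𝕜 (fun q => fderiv 𝕜 f q w) p v := by
  have hsnd : ∀ v w : E,
      fderiv 𝕜 (fun q => fderiv 𝕜 f q v) p w = fderiv 𝕜 (fderiv 𝕜 f) p w v := fun v w => by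
    rw [fderiv_clm_apply hf.fderiv.differentiableAt (differentiableAt_const v)]
    simp
  rw [hsnd, hsnd]
  exact hf.contDiffAt.isSymmSndFDerivAt_of_omega w v

end Directional

section PartialDerivatives

variable {f h : ℂ × ℂ → ℂ} {p : ℂ × ℂ} {Ω : Set (ℂ × ℂ)}

protected theorem AnalyticAt.dz (hf : AnalyticAt ℂ f p) : AnalyticAt ℂ (dz f) p :=
  hf.fderiv_apply _

protected theorem AnalyticAt.dt (hf : AnalyticAt ℂ f p) : AnalyticAt ℂ (dt f) p :=
  hf.fderiv_apply _

protected theorem AnalyticOnNhd.dz (hf : AnalyticOnNhd ℂ f Ω) : AnalyticOnNhd ℂ (dz f) Ω :=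
  fun q hq => (hf q hq).dz

theorem AnalyticAt.dt_dz_comm (hf : AnalyticAt ℂ f p) : dt (dz f) p = dz (dt f) p :=
  hf.fderiv_fderiv_apply_comm _ _

theorem dz_add (hf : DifferentiableAt ℂ f p) (hh : DifferentiableAt ℂ h p) :
    dz (fun q => f q + h q) p = dz f p + dz h p := by
  simp [dz, fderiv_fun_add hf hh]

theorem dz_mul (hf : DifferentiableAt ℂ f p) (hh : DifferentiableAt ℂ h p) :
    dz (fun q => f q * h q) p = dz f p * h p + f p * dz h p :=
  fderiv_fun_mul_apply hf hh _

theorem dz_div (hf : DifferentiableAt ℂ f p) (hh : DifferentiableAt ℂ h p) (h0 : h p ≠ 0) :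
    dz (fun q => f q / h q) p = (dz f p * h p - f p * dz h p) / h p ^ 2 :=
  fderiv_fun_div_apply hf hh h0 _

theorem dt_div (hf : DifferentiableAt ℂ f p) (hh : DifferentiableAt ℂ h p) (h0 : h p ≠ 0) :
    dt (fun q => f q / h q) p = (dt f p * h p - f p * dt h p) / h p ^ 2 :=
  fderiv_fun_div_apply hf hh h0 _

protected theorem Set.EqOn.dz (hΩ : IsOpen Ω) (hfh : EqOn f h Ω) : EqOn (dz f) (dz h) Ω :=
  fun q hq => by simp only [dz, (hfh.eventuallyEq_of_mem (hΩ.mem_nhds hq)).fderiv_eq]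

end PartialDerivatives

section LogDerivative

variable {g x F a : ℂ × ℂ → ℂ} {p : ℂ × ℂ} {Ω : Set (ℂ × ℂ)}

theorem dt_logDeriv_eq_dz (hg : AnalyticAt ℂ g p) (hg0 : g p ≠ 0) :
    dt (fun q => dz g q / g q) p = dz (fun q => dt g q / g q) p := by
  have hd := hg.differentiableAt
  rw [dt_div hg.dz.differentiableAt hd hg0, dz_div hg.dt.differentiableAt hd hg0, hg.dt_dz_comm]
  ring

theorem eqOn_dz_of_eqOn_mul (hΩ : IsOpen Ω) (hg : DifferentiableOn ℂ g Ω)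
    (ha : DifferentiableOn ℂ a Ω) (hgx : EqOn (dz g) (fun q => x q * g q) Ω)
    (hF : EqOn F (fun q => a q * g q) Ω) :
    EqOn (dz F) (fun q => (dz a q + a q * x q) * g q) Ω := fun q hq => by
  rw [hF.dz hΩ hq, dz_mul (ha.differentiableAt (hΩ.mem_nhds hq))
    (hg.differentiableAt (hΩ.mem_nhds hq)), hgx hq]
  ring

theorem shiffman_div_eqOn (hΩ : IsOpen Ω) (hg : AnalyticOnNhd ℂ g Ω)
    (hg0 : ∀ q ∈ Ω, g q ≠ 0) :
    EqOn (fun q => (dz (dz (dz g)) q - 3 * dz g q * dz (dz g) q / g q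
        + (3 / 2) * (dz g q) ^ 3 / (g q) ^ 2) / g q)
      (fun q => dz (dz (fun r => dz g r / g r)) q - (dz g q / g q) ^ 3 / 2) Ω := by
  set x := fun r => dz g r / g r
  have hx : AnalyticOnNhd ℂ x Ω := hg.dz.div hg hg0
  have hg₁ : EqOn (dz g) (fun q => x q * g q) Ω := fun q hq => (div_mul_cancel₀ _ (hg0 q hq)).symm
  have hg₂ := eqOn_dz_of_eqOn_mul hΩ hg.differentiableOn hx.differentiableOn hg₁ hg₁
  have hg₃ := eqOn_dz_of_eqOn_mul (a := fun q => dz x q + x q * x q) hΩ hg.differentiableOn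
    (hx.dz.differentiableOn.add (hx.differentiableOn.mul hx.differentiableOn)) hg₁ hg₂
  intro q hq
  have hxq := (hx q hq).differentiableAt
  have hda : dz (fun r => dz x r + x r * x r) q = dz (dz x) q + 2 * x q * dz x q := by
    rw [dz_add (hx.dz q hq).differentiableAt (hxq.fun_mul hxq), dz_mul hxq hxq]
    ring
  simp only [hg₃ hq, hg₂ hq, hg₁ hq, hda]
  field_simp [hg0 q hq]
  ring

end LogDerivative

/-- If a nowhere-zero holomorphic `g(z,t)` satisfies the Shiffman evolution equation
`∂g/∂t = (i/2)(g''' − 3 g' g''/g + (3/2)(g')³/g²)`, then `x = g'/g` satisfies the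
mKdV-type equation `∂x/∂t = (i/2)(x''' − (3/2) x² x')`. -/
theorem shiffman_flow_gives_mkdv_flow_of_log_derivative
    (Ω : Set (ℂ × ℂ)) (hΩ : IsOpen Ω) (g : ℂ × ℂ → ℂ)
    (hg : AnalyticOnNhd ℂ g Ω) (hg0 : ∀ p ∈ Ω, g p ≠ 0)
    (hev : ∀ p ∈ Ω,
      dt g p = (Complex.I / 2) * (dz (dz (dz g)) p
        - 3 * dz g p * dz (dz g) p / g p + (3 / 2) * (dz g p) ^ 3 / (g p) ^ 2)) :
    ∀ p ∈ Ω,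
      dt (fun q => dz g q / g q) p
        = (Complex.I / 2) * (dz (dz (dz (fun q => dz g q / g q))) p
            - (3 / 2) * (dz g p / g p) ^ 2 * dz (fun q => dz g q / g q) p) := by
  intro p hp
  set x := fun q => dz g q / g q
  show dt x p = I / 2 * (dz (dz (dz x)) p - 3 / 2 * x p ^ 2 * dz x p)
  have hx : AnalyticOnNhd ℂ x Ω := hg.dz.div hg hg0
  have hflow : EqOn (fun q => dt g q / g q) (fun q => I / 2 * dz (dz x) q - I / 4 * x q ^ 3) Ω :=
    fun q hq => by
      have hS := shiffman_div_eqOn hΩ hg hg0 hq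
      beta_reduce at hS
      show dt g q / g q = _
      rw [hev q hq, mul_div_assoc, hS]
      ring
  have hderiv := (((hx.dz.dz p hp).differentiableAt.hasFDerivAt.const_mul (I / 2)).fun_sub
    (((hx p hp).differentiableAt.hasFDerivAt.pow 3).const_mul (I / 4))).fderiv
  rw [dt_logDeriv_eq_dz (hg p hp) (hg0 p hp), hflow.dz hΩ hp, dz, hderiv]
  simp only [dz, sub_apply, smul_apply, smul_eq_mul, nsmul_eq_mul]
  ring
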